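/- arXiv:2410.02906 — 3 statements merged into one kernel-verified Lean document; each statement's English description precedes it below -/
import Mathlib

section
/- Let S⃗ be a simple unit (1+k)-vector in R^{1+d} and let t denote the time coordinate function. Then |∇^S t|² + |p(S⃗)|² = 1, where ∇^S t is the projection of e0 onto span(S⃗) and p(S⃗) is the image of S⃗ under the (multilinear extension of the) spatial projection p(t,x) = x; here |·| denotes the mass norm of a k-vector. -/
open scoped RealInnerProductSpace

noncomputable section

variable {d k : ℕ}

/-- The spatial projection p : ℝ^{1+d} → ℝ^d forgetting the time coordinate
(the coordinate of index 0). -/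
def spatialProj (u : EuclideanSpace ℝ (Fin (d + 1))) : EuclideanSpace ℝ (Fin d) :=
  WithLp.toLp 2 (fun j => u j.succ)

/-- The time unit vector e₀ ∈ ℝ^{1+d}. -/
def timeVec : EuclideanSpace ℝ (Fin (d + 1)) := EuclideanSpace.single 0 1

/-!
Write `cᵢ = ⟨e₀, vᵢ⟩`. Orthonormality gives `|∇^S t|² = Σ cᵢ²`, while removing the time
coordinate turns the Gram matrix of the `vᵢ`, the identity, into `1 - c cᵀ` for the `p(vᵢ)`.
The matrix determinant lemma gives `det (1 - c cᵀ) = 1 - Σ cᵢ²`.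
-/

theorem Orthonormal.norm_sum_smul_sq {ι E : Type*} [Fintype ι] [NormedAddCommGroup E]
    [InnerProductSpace ℝ E] {v : ι → E} (hv : Orthonormal ℝ v) (c : ι → ℝ) :
    ‖∑ i, c i • v i‖ ^ 2 = ∑ i, c i ^ 2 := by
  rw [← real_inner_self_eq_norm_sq, hv.inner_sum]
  simp [sq]

theorem Matrix.det_one_sub_vecMulVec {n R : Type*} [Fintype n] [DecidableEq n] [CommRing R]
    (u w : n → R) : (1 - vecMulVec u w).det = 1 - w ⬝ᵥ u := by
  rw [vecMulVec_eq Unit, det_one_sub_mul_comm, det_unique, Matrix.sub_apply, one_apply_eq,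
    replicateRow_mul_replicateCol_apply]

theorem inner_timeVec_left (u : EuclideanSpace ℝ (Fin (d + 1))) : ⟪timeVec, u⟫ = u 0 := by
  simp [timeVec, EuclideanSpace.inner_single_left]

theorem inner_spatialProj (u w : EuclideanSpace ℝ (Fin (d + 1))) :
    ⟪spatialProj u, spatialProj w⟫ = ⟪u, w⟫ - u 0 * w 0 := by
  simp only [spatialProj, PiLp.inner_apply, RCLike.inner_apply, conj_trivial,
    Fin.sum_univ_succ (n := d)]
  ring

theorem gram_spatialProj_of_orthonormal {ι : Type*} [DecidableEq ι]
    {v : ι → EuclideanSpace ℝ (Fin (d + 1))} (hv : Orthonormal ℝ v) :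
    Matrix.of (fun i j => ⟪spatialProj (v i), spatialProj (v j)⟫) =
      1 - Matrix.vecMulVec (fun i => v i 0) (fun i => v i 0) := by
  ext i j
  rw [Matrix.of_apply, inner_spatialProj, orthonormal_iff_ite.mp hv, Matrix.sub_apply,
    Matrix.one_apply, Matrix.vecMulVec_apply]

/-- Let `S⃗ = v₀ ∧ ⋯ ∧ v_k` be a simple unit (1+k)-vector in ℝ^{1+d}, given by
an orthonormal system `v`.  Then `|∇^S t|² + |p(S⃗)|² = 1`, where
`∇^S t = Σᵢ ⟨e₀, vᵢ⟩ vᵢ` is the orthogonal projection of `e₀` onto the span of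
the `vᵢ`, and the squared mass norm of the simple k-vector
`p(S⃗) = p(v₀) ∧ ⋯ ∧ p(v_k)` is the Gram determinant
`det (⟨p(vᵢ), p(vⱼ)⟩)ᵢⱼ`. -/
theorem sq_norm_gradS_add_sq_mass_spatialProj (v : Fin (k + 1) → EuclideanSpace ℝ (Fin (d + 1)))
    (hv : Orthonormal ℝ v) :
    ‖∑ i, ⟪(timeVec : EuclideanSpace ℝ (Fin (d + 1))), v i⟫ • v i‖ ^ 2 +
      Matrix.det (Matrix.of fun i j : Fin (k + 1) => ⟪spatialProj (v i), spatialProj (v j)⟫) = 1 := by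
  simp_rw [inner_timeVec_left]
  rw [hv.norm_sum_smul_sq, gram_spatialProj_of_orthonormal hv, Matrix.det_one_sub_vecMulVec,
    dotProduct]
  simp only [sq, add_sub_cancel]

end
end

section
/- Let (μ_j) be finite vector-valued Radon measures on a compact metric space X with values in R^N, converging weakly* to μ and with |μ_j|(X) → |μ|(X) (strict convergence). Let Φ: R^N → [0,∞) be continuous and positively 1-homogeneous. Then ∫ Φ(dμ_j/d|μ_j|) d|μ_j| → ∫ Φ(dμ/d|μ|) d|μ|. -/
open MeasureTheory Filter Topology BoundedContinuousFunction
open scoped RealInnerProductSpace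

section helpers

variable {E : Type*} [NormedAddCommGroup E] [InnerProductSpace ℝ E]

/-- Projection (up to radial scaling) onto the closed unit ball. -/
noncomputable def projBall (v : E) : E := (max 1 ‖v‖)⁻¹ • v

lemma projBall_continuous : Continuous (projBall (E := E)) := by
  apply Continuous.smul
  · exact (continuous_const.max continuous_norm).inv₀ (fun v => by positivity)
  · exact continuous_id

lemma norm_projBall_le (v : E) : ‖projBall v‖ ≤ 1 := by
  rw [projBall, norm_smul, norm_inv, Real.norm_of_nonneg (by positivity)]
  rw [inv_mul_le_iff₀ (by positivity), mul_one]
  exact le_max_right _ _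

lemma norm_sub_projBall_le {u : E} (hu : ‖u‖ ≤ 1) (v : E) :
    ‖u - projBall v‖ ≤ 2 * ‖u - v‖ := by
  have h1 : ‖u - projBall v‖ ≤ ‖u - v‖ + ‖v - projBall v‖ := by
    simpa using norm_sub_le_norm_sub_add_norm_sub u v (projBall v)
  have h2 : ‖v - projBall v‖ ≤ ‖u - v‖ := by
    rcases le_or_gt ‖v‖ 1 with h | h
    · have : projBall v = v := by
        rw [projBall, max_eq_left h, inv_one, one_smul]
      simp [this]
    · have hm : max 1 ‖v‖ = ‖v‖ := max_eq_right h.le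
      have : v - projBall v = (1 - ‖v‖⁻¹) • v := by
        rw [projBall, hm, sub_smul, one_smul]
      rw [this, norm_smul, Real.norm_of_nonneg, sub_mul, one_mul,
        inv_mul_cancel₀ (by positivity)]
      · have h3 : ‖v‖ - ‖u‖ ≤ ‖v - u‖ := norm_sub_norm_le v u
        rw [norm_sub_rev u v]
        linarith
      · have : ‖v‖⁻¹ ≤ 1 := by
          rw [inv_le_one_iff₀]; right; exact h.le
        linarith
  linarith

end helpers

section reshetnyak

variable {X : Type*} [MetricSpace X] [CompactSpace X]
    [MeasurableSpace X] [BorelSpace X] {N : ℕ}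

/-- Integrability of the pairing of a continuous function against a
unit-length a.e. strongly measurable field, w.r.t. a finite measure. -/
lemma integrable_inner_cm (μ : Measure X) [IsFiniteMeasure μ]
    (φ : X → EuclideanSpace ℝ (Fin N)) (hφ : AEStronglyMeasurable φ μ)
    (hb : ∀ᵐ x ∂μ, ‖φ x‖ = 1) (g : C(X, EuclideanSpace ℝ (Fin N))) :
    Integrable (fun x => ⟪g x, φ x⟫) μ :=
  ⟨g.continuous.aestronglyMeasurable.inner hφ,
    HasFiniteIntegral.of_bounded (C := ‖mkOfCompact g‖) (hb.mono fun x hx => by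
      rw [Real.norm_eq_abs]
      calc |⟪g x, φ x⟫| ≤ ‖g x‖ * ‖φ x‖ := abs_real_inner_le_norm _ _
        _ ≤ ‖mkOfCompact g‖ := by
            rw [hx, mul_one]; exact (mkOfCompact g).norm_coe_le_norm x)⟩

/-- Continuous functions on a compact space are integrable w.r.t. finite measures. -/
lemma integrable_cm {Y : Type*} [NormedAddCommGroup Y]
    (μ : Measure X) [IsFiniteMeasure μ] (g : C(X, Y)) :
    Integrable (fun x => g x) μ :=
  ⟨g.continuous.aestronglyMeasurable,
    HasFiniteIntegral.of_bounded (C := ‖mkOfCompact g‖)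
      (ae_of_all _ fun x => (mkOfCompact g).norm_coe_le_norm x)⟩

/-- L¹-approximation of the unit-length field `fL` by a continuous function with
values in the closed unit ball. -/
lemma exists_good_approx (lamL : Measure X) [IsFiniteMeasure lamL]
    (fL : X → EuclideanSpace ℝ (Fin N)) (hfLm : AEStronglyMeasurable fL lamL)
    (hunitL : ∀ᵐ x ∂lamL, ‖fL x‖ = 1) {η : ℝ} (hη : 0 < η) :
    ∃ g : C(X, EuclideanSpace ℝ (Fin N)), (∀ x, ‖g x‖ ≤ 1) ∧
      ∫ x, ‖fL x - g x‖ ∂lamL ≤ η := by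
  have hfLi : Integrable fL lamL :=
    ⟨hfLm, HasFiniteIntegral.of_bounded (C := 1) (hunitL.mono fun x hx => hx.le)⟩
  obtain ⟨g₀, hg₀, hg₀i⟩ := hfLi.exists_boundedContinuous_integral_sub_le (half_pos hη)
  refine ⟨⟨fun x => projBall (g₀ x), projBall_continuous.comp g₀.continuous⟩,
    fun x => norm_projBall_le _, ?_⟩
  have hgi : Integrable (fun x => projBall (g₀ x)) lamL :=
    ⟨(projBall_continuous.comp g₀.continuous).aestronglyMeasurable,
      HasFiniteIntegral.of_bounded (C := 1) (ae_of_all _ fun x => norm_projBall_le _)⟩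
  have hint1 : Integrable (fun x => ‖fL x - g₀ x‖) lamL := (hfLi.sub hg₀i).norm
  have hmono : ∀ᵐ x ∂lamL, ‖fL x - projBall (g₀ x)‖ ≤ 2 * ‖fL x - g₀ x‖ :=
    hunitL.mono fun x hx => norm_sub_projBall_le hx.le _
  calc ∫ x, ‖fL x - projBall (g₀ x)‖ ∂lamL
      ≤ ∫ x, 2 * ‖fL x - g₀ x‖ ∂lamL :=
        integral_mono_ae (hfLi.sub hgi).norm (hint1.const_mul 2) hmono
    _ = 2 * ∫ x, ‖fL x - g₀ x‖ ∂lamL := integral_const_mul _ _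
    _ ≤ η := by linarith

variable (lam : ℕ → Measure X) (lamL : Measure X)
    [∀ j, IsFiniteMeasure (lam j)] [IsFiniteMeasure lamL]
    (f : ℕ → X → EuclideanSpace ℝ (Fin N)) (fL : X → EuclideanSpace ℝ (Fin N))

/-- The fundamental limit: `∫ (1 - ⟪g, f_j⟫) dλ_j → ∫ (1 - ⟪g, fL⟫) dλ`. -/
lemma tendsto_one_sub_inner
    (hfm : ∀ j, AEStronglyMeasurable (f j) (lam j))
    (hfLm : AEStronglyMeasurable fL lamL)
    (hunit : ∀ j, ∀ᵐ x ∂lam j, ‖f j x‖ = 1)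
    (hunitL : ∀ᵐ x ∂lamL, ‖fL x‖ = 1)
    (hweak : ∀ g : C(X, EuclideanSpace ℝ (Fin N)),
      Tendsto (fun j => ∫ x, ⟪g x, f j x⟫ ∂lam j) atTop
        (𝓝 (∫ x, ⟪g x, fL x⟫ ∂lamL)))
    (hstrict : Tendsto (fun j => (lam j Set.univ).toReal) atTop
      (𝓝 ((lamL Set.univ).toReal)))
    (g : C(X, EuclideanSpace ℝ (Fin N))) :
    Tendsto (fun j => ∫ x, (1 - ⟪g x, f j x⟫) ∂lam j) atTop
      (𝓝 (∫ x, (1 - ⟪g x, fL x⟫) ∂lamL)) := by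
  have hj : ∀ j, ∫ x, (1 - ⟪g x, f j x⟫) ∂lam j
      = (lam j Set.univ).toReal - ∫ x, ⟪g x, f j x⟫ ∂lam j := fun j => by
    rw [integral_sub (integrable_const 1)
      (integrable_inner_cm (lam j) (f j) (hfm j) (hunit j) g),
      integral_const, smul_eq_mul, mul_one]; rfl
  have hL : ∫ x, (1 - ⟪g x, fL x⟫) ∂lamL
      = (lamL Set.univ).toReal - ∫ x, ⟪g x, fL x⟫ ∂lamL := by
    rw [integral_sub (integrable_const 1)
      (integrable_inner_cm lamL fL hfLm hunitL g),
      integral_const, smul_eq_mul, mul_one]; rfl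
  simp only [hj, hL]
  exact hstrict.sub (hweak g)

/-- A.e. nonnegativity of `1 - ⟪g, φ⟫` for `‖g‖ ≤ 1`, `‖φ‖ = 1` a.e. -/
lemma one_sub_inner_nonneg (μ : Measure X) (φ : X → EuclideanSpace ℝ (Fin N))
    (hb : ∀ᵐ x ∂μ, ‖φ x‖ = 1) (g : C(X, EuclideanSpace ℝ (Fin N)))
    (hg : ∀ x, ‖g x‖ ≤ 1) :
    ∀ᵐ x ∂μ, 0 ≤ 1 - ⟪g x, φ x⟫ :=
  hb.mono fun x hx => by
    have h1 : ⟪g x, φ x⟫ ≤ ‖g x‖ * ‖φ x‖ := real_inner_le_norm _ _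
    rw [hx, mul_one] at h1
    linarith [hg x]

/-- The limit value `∫ (1 - ⟪g, fL⟫) dλ` is controlled by `∫ ‖fL - g‖ dλ`. -/
lemma one_sub_inner_integral_le (lamL : Measure X) [IsFiniteMeasure lamL]
    (fL : X → EuclideanSpace ℝ (Fin N)) (hfLm : AEStronglyMeasurable fL lamL)
    (hunitL : ∀ᵐ x ∂lamL, ‖fL x‖ = 1) (g : C(X, EuclideanSpace ℝ (Fin N))) :
    ∫ x, (1 - ⟪g x, fL x⟫) ∂lamL ≤ ∫ x, ‖fL x - g x‖ ∂lamL := by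
  have hfLi : Integrable fL lamL :=
    ⟨hfLm, HasFiniteIntegral.of_bounded (C := 1) (hunitL.mono fun x hx => hx.le)⟩
  have h2 : Integrable (fun x => ‖fL x - g x‖) lamL :=
    (hfLi.sub (integrable_cm lamL g)).norm
  refine integral_mono_ae
    ((integrable_const 1).sub (integrable_inner_cm lamL fL hfLm hunitL g)) h2 ?_
  filter_upwards [hunitL] with x hx
  have : (1 : ℝ) - ⟪g x, fL x⟫ = ⟪fL x - g x, fL x⟫ := by
    rw [inner_sub_left, real_inner_self_eq_norm_sq, hx]
    ring
  rw [this]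
  calc ⟪fL x - g x, fL x⟫ ≤ ‖fL x - g x‖ * ‖fL x‖ := real_inner_le_norm _ _
    _ = ‖fL x - g x‖ := by rw [hx, mul_one]

/-- Weak convergence of the scalar total variation measures. -/
lemma weak_scalar
    (hfm : ∀ j, AEStronglyMeasurable (f j) (lam j))
    (hfLm : AEStronglyMeasurable fL lamL)
    (hunit : ∀ j, ∀ᵐ x ∂lam j, ‖f j x‖ = 1)
    (hunitL : ∀ᵐ x ∂lamL, ‖fL x‖ = 1)
    (hweak : ∀ g : C(X, EuclideanSpace ℝ (Fin N)),
      Tendsto (fun j => ∫ x, ⟪g x, f j x⟫ ∂lam j) atTop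
        (𝓝 (∫ x, ⟪g x, fL x⟫ ∂lamL)))
    (hstrict : Tendsto (fun j => (lam j Set.univ).toReal) atTop
      (𝓝 ((lamL Set.univ).toReal)))
    (h : C(X, ℝ)) :
    Tendsto (fun j => ∫ x, h x ∂lam j) atTop (𝓝 (∫ x, h x ∂lamL)) := by
  rw [Metric.tendsto_atTop]
  intro ε hε
  set Ch : ℝ := ‖mkOfCompact h‖ with hCh
  have hCh0 : 0 ≤ Ch := norm_nonneg _
  have hChb : ∀ x, |h x| ≤ Ch := fun x => by
    simpa [Real.norm_eq_abs, hCh] using (mkOfCompact h).norm_coe_le_norm x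
  set η : ℝ := ε / (4 * (Ch + 1)) with hηdef
  have hη : 0 < η := by positivity
  obtain ⟨g, hg1, hg2⟩ := exists_good_approx lamL fL hfLm hunitL hη
  -- the vector test function  x ↦ h x • g x
  set G : C(X, EuclideanSpace ℝ (Fin N)) :=
    ⟨fun x => h x • g x, h.continuous.smul g.continuous⟩ with hGdef
  have hGinner : ∀ (φ : X → EuclideanSpace ℝ (Fin N)) (x : X),
      ⟪G x, φ x⟫ = h x * ⟪g x, φ x⟫ := fun φ x => real_inner_smul_left _ _ _
  -- limit of I_j
  have hI := tendsto_one_sub_inner lam lamL f fL hfm hfLm hunit hunitL hweak hstrict g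
  have hIlim : ∫ x, (1 - ⟪g x, fL x⟫) ∂lamL ≤ η :=
    le_trans (one_sub_inner_integral_le lamL fL hfLm hunitL g) hg2
  have hInn : ∀ j, ∀ᵐ x ∂lam j, 0 ≤ 1 - ⟪g x, f j x⟫ := fun j =>
    one_sub_inner_nonneg (lam j) (f j) (hunit j) g hg1
  -- eventual bounds
  have hev1 : ∀ᶠ j in atTop, ∫ x, (1 - ⟪g x, f j x⟫) ∂lam j < 2 * η := by
    have := hI.eventually (eventually_lt_nhds (show ∫ x, (1 - ⟪g x, fL x⟫) ∂lamL < 2 * η by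
      linarith))
    exact this
  have hev2 : ∀ᶠ j in atTop,
      dist (∫ x, ⟪G x, f j x⟫ ∂lam j) (∫ x, ⟪G x, fL x⟫ ∂lamL) < ε / 4 :=
    (hweak G).eventually (Metric.ball_mem_nhds _ (by positivity))
  -- main estimate
  rw [eventually_atTop] at hev1 hev2
  obtain ⟨N1, hN1⟩ := hev1
  obtain ⟨N2, hN2⟩ := hev2
  refine ⟨max N1 N2, fun j hj => ?_⟩
  have hj1 := hN1 j (le_trans (le_max_left _ _) hj)
  have hj2 := hN2 j (le_trans (le_max_right _ _) hj)
  -- integrability facts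
  have int_inner : ∀ (μ : Measure X) [IsFiniteMeasure μ]
      (φ : X → EuclideanSpace ℝ (Fin N)), AEStronglyMeasurable φ μ →
      (∀ᵐ x ∂μ, ‖φ x‖ = 1) → Integrable (fun x => ⟪g x, φ x⟫) μ := fun μ _ φ h1 h2 =>
    integrable_inner_cm μ φ h1 h2 g
  -- decomposition:  ∫ h dμ = ∫ h (1 - ⟪g,φ⟫) dμ + ∫ ⟪G, φ⟫ dμ
  have decomp : ∀ (μ : Measure X) [IsFiniteMeasure μ]
      (φ : X → EuclideanSpace ℝ (Fin N)), AEStronglyMeasurable φ μ →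
      (∀ᵐ x ∂μ, ‖φ x‖ = 1) →
      ∫ x, h x ∂μ = (∫ x, h x * (1 - ⟪g x, φ x⟫) ∂μ) + ∫ x, ⟪G x, φ x⟫ ∂μ := by
    intro μ _ φ h1 h2
    have e1 : ∀ x, h x * (1 - ⟪g x, φ x⟫) = h x - ⟪G x, φ x⟫ := fun x => by
      rw [hGinner φ x]; ring
    simp only [e1]
    rw [integral_sub (integrable_cm μ h) (integrable_inner_cm μ φ h1 h2 G)]
    ring
  -- bound on the error terms
  have errb : ∀ (μ : Measure X) [IsFiniteMeasure μ]
      (φ : X → EuclideanSpace ℝ (Fin N)), AEStronglyMeasurable φ μ →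
      (∀ᵐ x ∂μ, ‖φ x‖ = 1) →
      |∫ x, h x * (1 - ⟪g x, φ x⟫) ∂μ| ≤ Ch * ∫ x, (1 - ⟪g x, φ x⟫) ∂μ := by
    intro μ _ φ h1 h2
    have hnn : ∀ᵐ x ∂μ, 0 ≤ 1 - ⟪g x, φ x⟫ := one_sub_inner_nonneg μ φ h2 g hg1
    have int1 : Integrable (fun x => h x * (1 - ⟪g x, φ x⟫)) μ := by
      have e1 : ∀ x, h x * (1 - ⟪g x, φ x⟫) = h x - ⟪G x, φ x⟫ := fun x => by
        rw [hGinner φ x]; ring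
      simp only [e1]
      exact (integrable_cm μ h).sub (integrable_inner_cm μ φ h1 h2 G)
    have intabs : Integrable (fun x => |h x| * |1 - ⟪g x, φ x⟫|) μ := by
      have := int1.abs
      simpa [abs_mul] using this
    calc |∫ x, h x * (1 - ⟪g x, φ x⟫) ∂μ|
        ≤ ∫ x, |h x| * |1 - ⟪g x, φ x⟫| ∂μ := by
          simpa [Real.norm_eq_abs, abs_mul] using norm_integral_le_integral_norm
            (μ := μ) (fun x => h x * (1 - ⟪g x, φ x⟫))
      _ ≤ ∫ x, Ch * (1 - ⟪g x, φ x⟫) ∂μ := by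
          refine integral_mono_ae intabs
            (((integrable_const 1).sub (integrable_inner_cm μ φ h1 h2 g)).const_mul Ch) ?_
          filter_upwards [hnn] with x hx
          rw [abs_of_nonneg hx]
          exact mul_le_mul_of_nonneg_right (hChb x) hx
      _ = Ch * ∫ x, (1 - ⟪g x, φ x⟫) ∂μ := integral_const_mul _ _
  -- put everything together
  have d1 := decomp (lam j) (f j) (hfm j) (hunit j)
  have d2 := decomp lamL fL hfLm hunitL
  have e1 := errb (lam j) (f j) (hfm j) (hunit j)
  have e2 := errb lamL fL hfLm hunitL
  have hInnj : 0 ≤ ∫ x, (1 - ⟪g x, f j x⟫) ∂lam j := integral_nonneg_of_ae (hInn j)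
  have hInnL : 0 ≤ ∫ x, (1 - ⟪g x, fL x⟫) ∂lamL := integral_nonneg_of_ae
    (one_sub_inner_nonneg lamL fL hunitL g hg1)
  rw [Real.dist_eq]
  rw [Real.dist_eq] at hj2
  have key : ∫ x, h x ∂lam j - ∫ x, h x ∂lamL
      = (∫ x, h x * (1 - ⟪g x, f j x⟫) ∂lam j)
        + ((∫ x, ⟪G x, f j x⟫ ∂lam j) - ∫ x, ⟪G x, fL x⟫ ∂lamL)
        - ∫ x, h x * (1 - ⟪g x, fL x⟫) ∂lamL := by
    rw [d1, d2]; ring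
  have b1 : |∫ x, h x * (1 - ⟪g x, f j x⟫) ∂lam j| ≤ Ch * (2 * η) :=
    le_trans e1 (mul_le_mul_of_nonneg_left hj1.le hCh0)
  have b2 : |∫ x, h x * (1 - ⟪g x, fL x⟫) ∂lamL| ≤ Ch * η :=
    le_trans e2 (mul_le_mul_of_nonneg_left hIlim hCh0)
  have hb3 : Ch * η ≤ ε / 4 := by
    have hε' : ε = 4 * (Ch + 1) * η := by rw [hηdef]; field_simp
    rw [hε']
    nlinarith [hη.le, hCh0]
  calc |∫ x, h x ∂lam j - ∫ x, h x ∂lamL|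
      ≤ |∫ x, h x * (1 - ⟪g x, f j x⟫) ∂lam j|
        + |(∫ x, ⟪G x, f j x⟫ ∂lam j) - ∫ x, ⟪G x, fL x⟫ ∂lamL|
        + |∫ x, h x * (1 - ⟪g x, fL x⟫) ∂lamL| := by
        rw [key]
        exact le_trans (abs_sub _ _) (by gcongr; exact abs_add_le _ _)
    _ < ε := by
        have : Ch * (2 * η) ≤ ε / 2 := by linarith
        linarith

end reshetnyak
set_option maxHeartbeats 1000000 in
/-- Reshetnyak continuity theorem:  let `(μ_j)` be finite ℝᴺ-valued Radon
measures on a compact metric space `X` converging weakly* to `μ` and with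
`|μ_j|(X) → |μ|(X)` (strict convergence), and let `Φ : ℝᴺ → [0,∞)` be
continuous and positively 1-homogeneous.  Then
`∫ Φ(dμ_j/d|μ_j|) d|μ_j| → ∫ Φ(dμ/d|μ|) d|μ|`.

We represent each vector measure `μ_j` by its polar decomposition
`μ_j = f_j |μ_j|`:  `lam j = |μ_j|` is the (finite positive) total variation
measure and `f j = dμ_j/d|μ_j|` is its polar density, of unit length
`|μ_j|`-a.e.  Weak* convergence is tested against continuous (hence bounded)
ℝᴺ-valued functions on the compact space `X`. -/
theorem reshetnyak_continuity {X : Type*} [MetricSpace X] [CompactSpace X]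
    [MeasurableSpace X] [BorelSpace X] {N : ℕ}
    (lam : ℕ → Measure X) (lamL : Measure X)
    [∀ j, IsFiniteMeasure (lam j)] [IsFiniteMeasure lamL]
    (f : ℕ → X → EuclideanSpace ℝ (Fin N)) (fL : X → EuclideanSpace ℝ (Fin N))
    (hfm : ∀ j, AEStronglyMeasurable (f j) (lam j))
    (hfLm : AEStronglyMeasurable fL lamL)
    (hunit : ∀ j, ∀ᵐ x ∂lam j, ‖f j x‖ = 1)
    (hunitL : ∀ᵐ x ∂lamL, ‖fL x‖ = 1)
    (hweak : ∀ g : C(X, EuclideanSpace ℝ (Fin N)),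
      Tendsto (fun j => ∫ x, ⟪g x, f j x⟫ ∂lam j) atTop
        (𝓝 (∫ x, ⟪g x, fL x⟫ ∂lamL)))
    (hstrict : Tendsto (fun j => (lam j Set.univ).toReal) atTop
      (𝓝 ((lamL Set.univ).toReal)))
    (Φ : EuclideanSpace ℝ (Fin N) → ℝ) (hΦc : Continuous Φ)
    (hΦnn : ∀ v, 0 ≤ Φ v)
    (hΦhom : ∀ (c : ℝ) (v), 0 ≤ c → Φ (c • v) = c * Φ v) :
    Tendsto (fun j => ∫ x, Φ (f j x) ∂lam j) atTop
      (𝓝 (∫ x, Φ (fL x) ∂lamL)) := by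
  rw [Metric.tendsto_atTop]
  intro ε hε
  set L : ℝ := (lamL Set.univ).toReal with hLdef
  have hL0 : 0 ≤ L := ENNReal.toReal_nonneg
  -- bound for Φ on the unit ball
  obtain ⟨C, hC⟩ := (isCompact_closedBall (0 : EuclideanSpace ℝ (Fin N))
    1).exists_bound_of_continuousOn hΦc.continuousOn
  set M : ℝ := max C 1 with hMdef
  have hM1 : (1 : ℝ) ≤ M := le_max_right _ _
  have hM0 : 0 < M := lt_of_lt_of_le one_pos hM1
  have hMb : ∀ v : EuclideanSpace ℝ (Fin N), ‖v‖ ≤ 1 → Φ v ≤ M := fun v hv => by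
    have h1 := hC v (by simpa [Metric.mem_closedBall, dist_zero_right] using hv)
    rw [Real.norm_eq_abs] at h1
    calc Φ v ≤ |Φ v| := le_abs_self _
      _ ≤ C := h1
      _ ≤ M := le_max_left _ _
  set ε₁ : ℝ := ε / (5 * (L + 1)) with hε₁def
  have hε₁ : 0 < ε₁ := by positivity
  -- uniform continuity of Φ on the closed unit ball
  have huc := (isCompact_closedBall (0 : EuclideanSpace ℝ (Fin N))
    1).uniformContinuousOn_of_continuous hΦc.continuousOn
  rw [Metric.uniformContinuousOn_iff] at huc
  obtain ⟨δ, hδ0, hδ⟩ := huc ε₁ hε₁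
  set K : ℝ := 2 * M / δ ^ 2 with hKdef
  have hK0 : 0 < K := by positivity
  -- key pointwise estimate
  have key : ∀ u v : EuclideanSpace ℝ (Fin N), ‖u‖ ≤ 1 → ‖v‖ ≤ 1 →
      |Φ u - Φ v| ≤ ε₁ + K * ‖u - v‖ ^ 2 := by
    intro u v hu hv
    have hum : u ∈ Metric.closedBall (0 : EuclideanSpace ℝ (Fin N)) 1 := by
      simpa [Metric.mem_closedBall, dist_zero_right] using hu
    have hvm : v ∈ Metric.closedBall (0 : EuclideanSpace ℝ (Fin N)) 1 := by
      simpa [Metric.mem_closedBall, dist_zero_right] using hv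
    rcases lt_or_ge (dist u v) δ with hlt | hge
    · have h2 := hδ u hum v hvm hlt
      rw [Real.dist_eq] at h2
      nlinarith [sq_nonneg ‖u - v‖, hK0.le]
    · have h1 : δ ^ 2 ≤ ‖u - v‖ ^ 2 := by
        have : δ ≤ ‖u - v‖ := by rwa [dist_eq_norm] at hge
        nlinarith
      have h2 : 2 * M ≤ K * ‖u - v‖ ^ 2 := by
        rw [hKdef, div_mul_eq_mul_div, le_div_iff₀ (by positivity)]
        nlinarith
      have h3 : |Φ u - Φ v| ≤ 2 * M := by
        rw [abs_sub_le_iff]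
        constructor <;> nlinarith [hΦnn u, hΦnn v, hMb u hu, hMb v hv]
      linarith
  -- the approximating continuous field g
  set η : ℝ := ε / (100 * (K + 1)) with hηdef
  have hη : 0 < η := by positivity
  obtain ⟨g, hg1, hg2⟩ := exists_good_approx lamL fL hfLm hunitL hη
  have hI := tendsto_one_sub_inner lam lamL f fL hfm hfLm hunit hunitL hweak hstrict g
  have hIlim : ∫ x, (1 - ⟪g x, fL x⟫) ∂lamL ≤ η :=
    le_trans (one_sub_inner_integral_le lamL fL hfLm hunitL g) hg2
  -- scalar weak convergence for the test function Φ ∘ g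
  set Phig : C(X, ℝ) := ⟨fun x => Φ (g x), hΦc.comp g.continuous⟩ with hPhigdef
  have hB := weak_scalar lam lamL f fL hfm hfLm hunit hunitL hweak hstrict Phig
  simp only [hPhigdef, ContinuousMap.coe_mk] at hB
  -- per-measure estimate
  have est : ∀ (μ : Measure X) [IsFiniteMeasure μ]
      (φ : X → EuclideanSpace ℝ (Fin N)), AEStronglyMeasurable φ μ →
      (∀ᵐ x ∂μ, ‖φ x‖ = 1) →
      |(∫ x, Φ (φ x) ∂μ) - ∫ x, Φ (g x) ∂μ|
        ≤ ε₁ * (μ Set.univ).toReal + 2 * K * ∫ x, (1 - ⟪g x, φ x⟫) ∂μ := by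
    intro μ _ φ h1 h2
    have intΦφ : Integrable (fun x => Φ (φ x)) μ :=
      ⟨hΦc.comp_aestronglyMeasurable h1,
        HasFiniteIntegral.of_bounded (C := M) (h2.mono fun x hx => by
          rw [Real.norm_eq_abs, abs_of_nonneg (hΦnn _)]
          exact hMb _ (le_of_eq hx))⟩
    have intΦg : Integrable (fun x => Φ (g x)) μ := integrable_cm μ Phig
    have intinner : Integrable (fun x => (1 : ℝ) - ⟪g x, φ x⟫) μ :=
      (integrable_const 1).sub (integrable_inner_cm μ φ h1 h2 g)
    have intRHS : Integrable (fun x => ε₁ + 2 * K * (1 - ⟪g x, φ x⟫)) μ :=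
      (integrable_const ε₁).add (intinner.const_mul (2 * K))
    have hptwise : ∀ᵐ x ∂μ, |Φ (φ x) - Φ (g x)| ≤ ε₁ + 2 * K * (1 - ⟪g x, φ x⟫) := by
      filter_upwards [h2] with x hx
      have k1 := key (φ x) (g x) (le_of_eq hx) (hg1 x)
      have k2 : ‖φ x - g x‖ ^ 2 ≤ 2 * (1 - ⟪g x, φ x⟫) := by
        have h4 := norm_sub_sq_real (φ x) (g x)
        rw [real_inner_comm] at h4
        nlinarith [hg1 x, norm_nonneg (g x)]
      nlinarith [hK0.le]
    calc |(∫ x, Φ (φ x) ∂μ) - ∫ x, Φ (g x) ∂μ|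
        = |∫ x, (Φ (φ x) - Φ (g x)) ∂μ| := by rw [integral_sub intΦφ intΦg]
      _ ≤ ∫ x, |Φ (φ x) - Φ (g x)| ∂μ := by
          simpa [Real.norm_eq_abs] using norm_integral_le_integral_norm
            (μ := μ) (fun x => Φ (φ x) - Φ (g x))
      _ ≤ ∫ x, (ε₁ + 2 * K * (1 - ⟪g x, φ x⟫)) ∂μ :=
          integral_mono_ae (intΦφ.sub intΦg).abs intRHS hptwise
      _ = ε₁ * (μ Set.univ).toReal + 2 * K * ∫ x, (1 - ⟪g x, φ x⟫) ∂μ := by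
          rw [integral_add (integrable_const ε₁) (intinner.const_mul (2 * K)),
            integral_const, integral_const_mul, smul_eq_mul, measureReal_def]
          ring
  -- eventual bounds
  have hev1 : ∀ᶠ j in atTop, ∫ x, (1 - ⟪g x, f j x⟫) ∂lam j < 2 * η :=
    hI.eventually (eventually_lt_nhds (by linarith))
  have hev2 : ∀ᶠ j in atTop, (lam j Set.univ).toReal < L + 1 :=
    hstrict.eventually (eventually_lt_nhds (by linarith))
  have hev3 : ∀ᶠ j in atTop,
      dist (∫ x, Φ (g x) ∂lam j) (∫ x, Φ (g x) ∂lamL) < ε / 5 :=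
    hB.eventually (Metric.ball_mem_nhds _ (by positivity))
  rw [eventually_atTop] at hev1 hev2 hev3
  obtain ⟨N1, hN1⟩ := hev1
  obtain ⟨N2, hN2⟩ := hev2
  obtain ⟨N3, hN3⟩ := hev3
  refine ⟨max N1 (max N2 N3), fun j hj => ?_⟩
  have hj1 := hN1 j (le_trans (le_max_left _ _) hj)
  have hj2 := hN2 j (le_trans (le_trans (le_max_left _ _) (le_max_right _ _)) hj)
  have hj3 := hN3 j (le_trans (le_trans (le_max_right _ _) (le_max_right _ _)) hj)
  rw [Real.dist_eq] at hj3 ⊢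
  have hA := est (lam j) (f j) (hfm j) (hunit j)
  have hCC := est lamL fL hfLm hunitL
  have hInnj : 0 ≤ ∫ x, (1 - ⟪g x, f j x⟫) ∂lam j :=
    integral_nonneg_of_ae (one_sub_inner_nonneg (lam j) (f j) (hunit j) g hg1)
  -- arithmetic
  have hεa : ε₁ * (L + 1) = ε / 5 := by
    rw [hε₁def]; field_simp
  have hεb : ε₁ * L ≤ ε / 5 := by
    have h7 := mul_le_mul_of_nonneg_left (by linarith : L ≤ L + 1) hε₁.le
    linarith
  have hA' : |(∫ x, Φ (f j x) ∂lam j) - ∫ x, Φ (g x) ∂lam j|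
      ≤ ε / 5 + 2 * K * (2 * η) := by
    have h5 : ε₁ * (lam j Set.univ).toReal ≤ ε / 5 := by
      have h7 := mul_le_mul_of_nonneg_left hj2.le hε₁.le
      linarith
    have h6 : 2 * K * ∫ x, (1 - ⟪g x, f j x⟫) ∂lam j ≤ 2 * K * (2 * η) :=
      mul_le_mul_of_nonneg_left hj1.le (by positivity)
    linarith
  have hC' : |(∫ x, Φ (fL x) ∂lamL) - ∫ x, Φ (g x) ∂lamL|
      ≤ ε / 5 + 2 * K * η := by
    have h6 : 2 * K * ∫ x, (1 - ⟪g x, fL x⟫) ∂lamL ≤ 2 * K * η :=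
      mul_le_mul_of_nonneg_left hIlim (by positivity)
    linarith
  have hKη : K * η ≤ ε / 100 := by
    have hη' : ε = 100 * (K + 1) * η := by rw [hηdef]; field_simp
    have e : ε / 100 = (K + 1) * η := by rw [hη']; ring
    have h7 := mul_le_mul_of_nonneg_right (by linarith : K ≤ K + 1) hη.le
    linarith
  calc |(∫ x, Φ (f j x) ∂lam j) - ∫ x, Φ (fL x) ∂lamL|
      ≤ |(∫ x, Φ (f j x) ∂lam j) - ∫ x, Φ (g x) ∂lam j|
        + |(∫ x, Φ (g x) ∂lam j) - ∫ x, Φ (g x) ∂lamL|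
        + |(∫ x, Φ (fL x) ∂lamL) - ∫ x, Φ (g x) ∂lamL| := by
        have := abs_sub_abs_le_abs_sub ((∫ x, Φ (f j x) ∂lam j)) ((∫ x, Φ (fL x) ∂lamL))
        have t1 : (∫ x, Φ (f j x) ∂lam j) - ∫ x, Φ (fL x) ∂lamL
            = ((∫ x, Φ (f j x) ∂lam j) - ∫ x, Φ (g x) ∂lam j)
              + ((∫ x, Φ (g x) ∂lam j) - ∫ x, Φ (g x) ∂lamL)
              - ((∫ x, Φ (fL x) ∂lamL) - ∫ x, Φ (g x) ∂lamL) := by ring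
        rw [t1]
        exact le_trans (abs_sub _ _) (by gcongr; exact abs_add_le _ _)
    _ < ε := by linarith
end

section
/- Let p_S(t) := p + (1/2) Σ_{b∈B} b ⊗ ⋆ p_*( S^b ⌞ ((0,t) × R³) ) be the plastic distortion path induced by a slip trajectory S = (S^b)_b of normal 2-currents in space-time [0,T] × cl Ω. Then t ↦ p_S(t) has bounded variation with respect to the total variation norm, and Var_M(p_S; (0,t)) ≤ C Var(S; (0,t)), where Var(S; I) = ½ Σ_b ∫_{I×R³} |p(S⃗^b)| d|S^b| and C depends only on max_b |b|. -/
open MeasureTheory Filter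
open scoped NNReal ENNReal

noncomputable section

/-- The tensor product `b ⊗ v` of two vectors of ℝ³, as a 3×3 matrix. -/
def tensorMat (b v : Fin 3 → ℝ) : Fin 3 → Fin 3 → ℝ := fun i j => b i * v j

/-- The total-variation mass `M(ρ)` of a (matrix-valued) set function:
the supremum over finite disjoint measurable families of the sums of the
norms of the values. -/
def setFnMass {E M : Type*} [MeasurableSpace E] [NormedAddCommGroup M]
    (ρ : Set E → M) : ℝ≥0∞ :=
  ⨆ (n : ℕ) (f : Fin n → Set E) (_ : ∀ i, MeasurableSet (f i))
    (_ : Pairwise (Function.onFun Disjoint f)), ∑ i, (‖ρ (f i)‖₊ : ℝ≥0∞)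

/-- The variation in time, with respect to the mass norm, of a path of
(matrix-valued) set functions: the supremum over partitions
`t₀ ≤ t₁ ≤ ⋯ ≤ t_n` in `s` of the sums of the masses of the increments. -/
def pathVarM {E M : Type*} [MeasurableSpace E] [NormedAddCommGroup M]
    (P : ℝ → Set E → M) (s : Set ℝ) : ℝ≥0∞ :=
  ⨆ (n : ℕ) (τ : Fin (n + 1) → ℝ) (_ : Monotone τ) (_ : ∀ i, τ i ∈ s),
    ∑ i : Fin n, setFnMass (fun A => P (τ i.succ) A - P (τ i.castSucc) A)

lemma tensorMat_sub (b u v : Fin 3 → ℝ) :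
    tensorMat b (u - v) = tensorMat b u - tensorMat b v := by
  funext i j; simp [tensorMat, mul_sub]

lemma tensorMat_nnnorm_le (b v : Fin 3 → ℝ) :
    ‖tensorMat b v‖₊ ≤ ‖b‖₊ * ‖v‖₊ := by
  rw [pi_nnnorm_le_iff]
  intro i
  have h : tensorMat b v i = b i • v := by funext j; simp [tensorMat]
  rw [h, nnnorm_smul]
  exact mul_le_mul_left (nnnorm_le_pi_nnnorm b i) _

/-- BV regularity of the plastic distortion path: let `B ⊂ ℝ³∖{0}` be the
finite (symmetric) set of Burgers vectors and
`p_S(t) = p + ½ Σ_{b∈B} b ⊗ ⋆p_*(S^b ⌞ ((0,t)×ℝ³))`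
be the plastic distortion path induced by a slip trajectory `S = (S^b)_b` of
normal 2-currents in space-time `[0,T] × cl Ω`.  Then `t ↦ p_S(t)` is of
bounded variation with respect to the total-variation (mass) norm, and
`Var_M(p_S;(0,t)) ≤ C · Var(S;(0,t))` with
`Var(S;I) = ½ Σ_b ∫_{I×ℝ³} |p(S⃗^b)| d|S^b|` and `C = C(max_b |b|)`.

Each normal current `S^b` is modeled by its total variation measure
`μ b = |S^b|` (a finite measure on space-time `ℝ × ℝ³`) and the vector field
`σ b = ⋆ p(S⃗^b)` (the Hodge dual of the spatial part of its orienting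
2-vector field; since `⋆` is an isometry, `‖σ b x‖ = |p(S⃗^b)(x)|`), so that
the ℝ³-valued measure `⋆p_*(S^b ⌞ ((0,t)×ℝ³))` assigns to a set `A ⊆ ℝ³` the
vector `∫_{(0,t)×A} σ b d|S^b|`; this is the content of hypothesis `hflow`
defining the path `pS` of matrix-valued set functions. -/
theorem plastic_path_BV (B : Finset (Fin 3 → ℝ)) (hB0 : (0 : Fin 3 → ℝ) ∉ B)
    (hBsym : ∀ b ∈ B, -b ∈ B) :
    ∃ C : ℝ≥0∞, 0 < C ∧ C < ⊤ ∧
      ∀ (T : ℝ) (_ : 0 < T)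
        (μ : (Fin 3 → ℝ) → Measure (ℝ × (Fin 3 → ℝ)))
        (_ : ∀ b ∈ B, IsFiniteMeasure (μ b))
        (σ : (Fin 3 → ℝ) → ℝ × (Fin 3 → ℝ) → Fin 3 → ℝ)
        (_ : ∀ b ∈ B, Integrable (σ b) (μ b))
        (p : Set (Fin 3 → ℝ) → Fin 3 → Fin 3 → ℝ)
        (pS : ℝ → Set (Fin 3 → ℝ) → Fin 3 → Fin 3 → ℝ)
        (_ : ∀ (t : ℝ) (A : Set (Fin 3 → ℝ)),
          pS t A = p A + (1 / 2 : ℝ) •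
            ∑ b ∈ B, tensorMat b (∫ x in (Set.Ioo 0 t ×ˢ A), σ b x ∂μ b))
        (t : ℝ) (_ : 0 < t) (_ : t ≤ T),
        pathVarM pS (Set.Ioo 0 t) ≤
          C * ((1 / 2 : ℝ≥0∞) * ∑ b ∈ B,
            ∫⁻ x in (Set.Ioo 0 t ×ˢ (Set.univ : Set (Fin 3 → ℝ))),
              (‖σ b x‖₊ : ℝ≥0∞) ∂μ b) := by
  classical
  refine ⟨2 * ((∑ b ∈ B, (‖b‖₊ : ℝ≥0∞)) + 1), ?_, ?_, ?_⟩
  · exact ENNReal.mul_pos two_ne_zero (by simp)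
  · exact ENNReal.mul_lt_top (by simp)
      (ENNReal.add_lt_top.2 ⟨ENNReal.sum_lt_top.2 fun b _ => ENNReal.coe_lt_top, ENNReal.one_lt_top⟩)
  intro T hT μ hμ σ hσ p pS hflow t ht htT
  set CB : ℝ≥0∞ := (∑ b ∈ B, (‖b‖₊ : ℝ≥0∞)) + 1 with hCBdef
  have key : pathVarM pS (Set.Ioo 0 t) ≤
      CB * ∑ b ∈ B, ∫⁻ x in (Set.Ioo 0 t ×ˢ (Set.univ : Set (Fin 3 → ℝ))),
        (‖σ b x‖₊ : ℝ≥0∞) ∂μ b := by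
    rw [pathVarM]
    refine iSup_le fun n => iSup_le fun τ => iSup_le fun hmono => iSup_le fun hmem => ?_
    set D : Fin n → Set ℝ :=
      fun i => Set.Ioo 0 (τ i.succ) \ Set.Ioo 0 (τ i.castSucc) with hDdef
    have hDmeas : ∀ i, MeasurableSet (D i) :=
      fun i => measurableSet_Ioo.diff measurableSet_Ioo
    have hDsub : ∀ i, D i ⊆ Set.Ioo 0 t := fun i =>
      Set.diff_subset.trans (Set.Ioo_subset_Ioo le_rfl (hmem i.succ).2.le)
    have hDdisj : Pairwise (Function.onFun Disjoint D) := by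
      have haux : ∀ i j : Fin n, i < j → Disjoint (D i) (D j) := by
        intro i j hij
        rw [Set.disjoint_left]
        rintro x ⟨hx1, -⟩ ⟨hx2, hx3⟩
        have hle : τ i.succ ≤ τ j.castSucc := hmono (by
          rw [Fin.le_def, Fin.val_succ, Fin.coe_castSucc]; exact hij)
        exact hx3 ⟨hx2.1, lt_of_lt_of_le (lt_of_lt_of_le hx1.2 hle) le_rfl⟩
      intro i j hij
      rcases lt_or_gt_of_ne hij with h | h
      · exact haux i j h
      · exact (haux j i h).symm
    have step1 : ∀ i : Fin n,
        setFnMass (fun A => pS (τ i.succ) A - pS (τ i.castSucc) A)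
          ≤ ∑ b ∈ B, (‖b‖₊ : ℝ≥0∞) *
              ∫⁻ x in D i ×ˢ (Set.univ : Set (Fin 3 → ℝ)), (‖σ b x‖₊ : ℝ≥0∞) ∂μ b := by
      intro i
      rw [setFnMass]
      refine iSup_le fun m => iSup_le fun f => iSup_le fun hfm => iSup_le fun hfd => ?_
      have hincr : ∀ j : Fin m,
          pS (τ i.succ) (f j) - pS (τ i.castSucc) (f j)
            = (1/2 : ℝ) • ∑ b ∈ B, tensorMat b (∫ x in D i ×ˢ f j, σ b x ∂μ b) := by
        intro j
        rw [hflow, hflow]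
        have h1 : ∀ b ∈ B, (∫ x in D i ×ˢ f j, σ b x ∂μ b)
            = (∫ x in Set.Ioo 0 (τ i.succ) ×ˢ f j, σ b x ∂μ b)
              - ∫ x in Set.Ioo 0 (τ i.castSucc) ×ˢ f j, σ b x ∂μ b := by
          intro b hb
          have hset : D i ×ˢ f j
              = (Set.Ioo 0 (τ i.succ) ×ˢ f j) \ (Set.Ioo 0 (τ i.castSucc) ×ˢ f j) := by
            rw [Set.prod_diff_prod]; simp [hDdef]
          rw [hset]
          exact integral_diff (measurableSet_Ioo.prod (hfm j))
            ((hσ b hb).integrableOn)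
            (Set.prod_mono (Set.Ioo_subset_Ioo le_rfl (hmono (show i.castSucc < i.succ from Fin.castSucc_lt_succ).le)) le_rfl)
        have h2 : ∑ b ∈ B, tensorMat b (∫ x in D i ×ˢ f j, σ b x ∂μ b)
            = (∑ b ∈ B, tensorMat b (∫ x in Set.Ioo 0 (τ i.succ) ×ˢ f j, σ b x ∂μ b))
              - ∑ b ∈ B, tensorMat b (∫ x in Set.Ioo 0 (τ i.castSucc) ×ˢ f j, σ b x ∂μ b) := by
          rw [← Finset.sum_sub_distrib]
          exact Finset.sum_congr rfl fun b hb => by rw [h1 b hb, tensorMat_sub]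
        rw [h2, smul_sub]
        abel
      have hj : ∀ j : Fin m,
          (‖pS (τ i.succ) (f j) - pS (τ i.castSucc) (f j)‖₊ : ℝ≥0∞)
            ≤ ∑ b ∈ B, (‖b‖₊ : ℝ≥0∞) * ∫⁻ x in D i ×ˢ f j, (‖σ b x‖₊ : ℝ≥0∞) ∂μ b := by
        intro j
        rw [hincr j]
        have hhalf : ‖((1:ℝ)/2)‖₊ ≤ 1 := by
          rw [← NNReal.coe_le_coe]; simp [Real.norm_eq_abs]; norm_num
        calc (‖(1/2 : ℝ) • ∑ b ∈ B, tensorMat b (∫ x in D i ×ˢ f j, σ b x ∂μ b)‖₊ : ℝ≥0∞)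
            ≤ (‖∑ b ∈ B, tensorMat b (∫ x in D i ×ˢ f j, σ b x ∂μ b)‖₊ : ℝ≥0∞) := by
              rw [nnnorm_smul]
              exact_mod_cast mul_le_of_le_one_left zero_le hhalf
          _ ≤ ∑ b ∈ B, (‖tensorMat b (∫ x in D i ×ˢ f j, σ b x ∂μ b)‖₊ : ℝ≥0∞) := by
              exact_mod_cast nnnorm_sum_le B _
          _ ≤ ∑ b ∈ B, (‖b‖₊ : ℝ≥0∞) * ∫⁻ x in D i ×ˢ f j, (‖σ b x‖₊ : ℝ≥0∞) ∂μ b := by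
              refine Finset.sum_le_sum fun b hb => ?_
              calc (‖tensorMat b (∫ x in D i ×ˢ f j, σ b x ∂μ b)‖₊ : ℝ≥0∞)
                  ≤ (‖b‖₊ : ℝ≥0∞) * (‖∫ x in D i ×ˢ f j, σ b x ∂μ b‖₊ : ℝ≥0∞) := by
                    exact_mod_cast tensorMat_nnnorm_le b _
                _ ≤ (‖b‖₊ : ℝ≥0∞) * ∫⁻ x in D i ×ˢ f j, (‖σ b x‖₊ : ℝ≥0∞) ∂μ b :=
                    mul_le_mul_right (enorm_integral_le_lintegral_enorm _) _
      calc ∑ j : Fin m, (‖pS (τ i.succ) (f j) - pS (τ i.castSucc) (f j)‖₊ : ℝ≥0∞)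
          ≤ ∑ j : Fin m, ∑ b ∈ B, (‖b‖₊ : ℝ≥0∞) *
              ∫⁻ x in D i ×ˢ f j, (‖σ b x‖₊ : ℝ≥0∞) ∂μ b :=
            Finset.sum_le_sum fun j _ => hj j
        _ = ∑ b ∈ B, (‖b‖₊ : ℝ≥0∞) * ∑ j : Fin m,
              ∫⁻ x in D i ×ˢ f j, (‖σ b x‖₊ : ℝ≥0∞) ∂μ b := by
            rw [Finset.sum_comm]
            exact Finset.sum_congr rfl fun b _ => by rw [Finset.mul_sum]
        _ ≤ ∑ b ∈ B, (‖b‖₊ : ℝ≥0∞) *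
              ∫⁻ x in D i ×ˢ (Set.univ : Set (Fin 3 → ℝ)), (‖σ b x‖₊ : ℝ≥0∞) ∂μ b := by
            refine Finset.sum_le_sum fun b _ => mul_le_mul_right ?_ _
            rw [← tsum_fintype (L := SummationFilter.unconditional _), ← lintegral_iUnion (fun j => (hDmeas i).prod (hfm j))
              (fun j k hjk => Set.disjoint_prod.2 (Or.inr (hfd hjk)))]
            exact lintegral_mono_set
              (Set.iUnion_subset fun j => Set.prod_mono le_rfl (Set.subset_univ _))
    calc ∑ i : Fin n, setFnMass (fun A => pS (τ i.succ) A - pS (τ i.castSucc) A)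
        ≤ ∑ i : Fin n, ∑ b ∈ B, (‖b‖₊ : ℝ≥0∞) *
            ∫⁻ x in D i ×ˢ (Set.univ : Set (Fin 3 → ℝ)), (‖σ b x‖₊ : ℝ≥0∞) ∂μ b :=
          Finset.sum_le_sum fun i _ => step1 i
      _ = ∑ b ∈ B, (‖b‖₊ : ℝ≥0∞) * ∑ i : Fin n,
            ∫⁻ x in D i ×ˢ (Set.univ : Set (Fin 3 → ℝ)), (‖σ b x‖₊ : ℝ≥0∞) ∂μ b := by
          rw [Finset.sum_comm]
          exact Finset.sum_congr rfl fun b _ => by rw [Finset.mul_sum]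
      _ ≤ ∑ b ∈ B, (‖b‖₊ : ℝ≥0∞) *
            ∫⁻ x in (Set.Ioo 0 t ×ˢ (Set.univ : Set (Fin 3 → ℝ))), (‖σ b x‖₊ : ℝ≥0∞) ∂μ b := by
          refine Finset.sum_le_sum fun b _ => mul_le_mul_right ?_ _
          rw [← tsum_fintype (L := SummationFilter.unconditional _), ← lintegral_iUnion
            (fun i => (hDmeas i).prod MeasurableSet.univ)
            (fun i j hij => Set.disjoint_prod.2 (Or.inl (hDdisj hij)))]
          exact lintegral_mono_set
            (Set.iUnion_subset fun i => Set.prod_mono (hDsub i) le_rfl)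
      _ ≤ ∑ b ∈ B, CB *
            ∫⁻ x in (Set.Ioo 0 t ×ˢ (Set.univ : Set (Fin 3 → ℝ))), (‖σ b x‖₊ : ℝ≥0∞) ∂μ b := by
          refine Finset.sum_le_sum fun b hb => mul_le_mul_left ?_ _
          exact le_trans (Finset.single_le_sum (f := fun b => ((‖b‖₊ : ℝ≥0∞)))
            (fun _ _ => zero_le) hb) le_self_add
      _ = CB * ∑ b ∈ B, ∫⁻ x in (Set.Ioo 0 t ×ˢ (Set.univ : Set (Fin 3 → ℝ))),
            (‖σ b x‖₊ : ℝ≥0∞) ∂μ b := by rw [Finset.mul_sum]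
  refine key.trans (le_of_eq ?_)
  rw [one_div, mul_mul_mul_comm, ENNReal.mul_inv_cancel two_ne_zero ENNReal.ofNat_ne_top, one_mul]


end
end
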